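/- With R, π, K, V, L as above (L a maximal integral lattice with dual L*), one has {l ∈ L : ⟨l, L⟩ ⊆ πR} = π L*. -/

import Mathlib

/-!
If `v ∈ L*`, then `π ^ n • ⟨v, v⟩` is integral for some `n`. While `n ≥ 2`, the vector
`u = π ^ (n - 1) • v` pairs integrally with `L` and with itself (as `2n - 2 ≥ n`), so `u ∈ L` by
maximality of `L`, and then `π ^ (n - 1) • ⟨v, v⟩ = ⟨u, v⟩` is integral. Once `π • ⟨v, v⟩` is
integral, `π • v` pairs integrally with `L` and with itself, so `π • v ∈ L`. Thus `π L* ⊆ L`, and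
both inclusions of the claim follow by scaling with `π` and `π⁻¹`.
-/

open LinearMap (BilinForm)

namespace LinearMap.BilinForm

variable {R K V : Type*} [CommRing R] [Field K] [Algebra R K]
  [AddCommGroup V] [Module K V] [Module R V] [IsScalarTower R K V]

structure IsMaximalIntegralLattice (B : BilinForm K V) (L : Submodule R V) : Prop where
  fg : L.FG
  span_eq_top : Submodule.span K (L : Set V) = ⊤
  le_dualSubmodule : L ≤ B.dualSubmodule L
  eq_of_le {L' : Submodule R V} : L'.FG → Submodule.span K (L' : Set V) = ⊤ →
    L' ≤ B.dualSubmodule L' → L ≤ L' → L' = L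

variable {B : BilinForm K V} {L : Submodule R V}

theorem IsMaximalIntegralLattice.mem_of_mem_dualSubmodule (hL : B.IsMaximalIntegralLattice L)
    (hB : B.IsSymm) {u : V} (hu : u ∈ B.dualSubmodule L) (huu : B u u ∈ (1 : Submodule R K)) :
    u ∈ L := by
  set M := L ⊔ Submodule.span R {u}
  have hLM : L ≤ M := le_sup_left
  suffices M ≤ B.dualSubmodule M by
    rw [← hL.eq_of_le (hL.fg.sup (Submodule.fg_span_singleton u))
      (eq_top_mono (Submodule.span_mono hLM) hL.span_eq_top) this hLM]
    exact Submodule.mem_sup_right (Submodule.mem_span_singleton_self u)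
  rintro _ hz _ hw
  obtain ⟨x, hx, _, hru, rfl⟩ := Submodule.mem_sup.mp hz
  obtain ⟨r, rfl⟩ := Submodule.mem_span_singleton.mp hru
  obtain ⟨y, hy, _, hsu, rfl⟩ := Submodule.mem_sup.mp hw
  obtain ⟨s, rfl⟩ := Submodule.mem_span_singleton.mp hsu
  rw [add_left, add_right, add_right, smul_left_of_tower, smul_left_of_tower, smul_right_of_tower,
    smul_right_of_tower, hB.eq x u]
  exact add_mem (add_mem (hL.le_dualSubmodule hx y hy) (Submodule.smul_mem _ s (hu x hx)))
    (add_mem (Submodule.smul_mem _ r (hu y hy))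
      (Submodule.smul_mem _ r (Submodule.smul_mem _ s huu)))

theorem IsMaximalIntegralLattice.pow_succ_smul_self_mem_one_of_pow_succ_succ
    (hL : B.IsMaximalIntegralLattice L) (hB : B.IsSymm) {v : V} (hv : v ∈ B.dualSubmodule L)
    (r : R) {n : ℕ} (h : r ^ (n + 2) • B v v ∈ (1 : Submodule R K)) :
    r ^ (n + 1) • B v v ∈ (1 : Submodule R K) := by
  have hu : r ^ (n + 1) • v ∈ L := by
    refine hL.mem_of_mem_dualSubmodule hB (Submodule.smul_mem _ _ hv) ?_
    rw [smul_left_of_tower, smul_right_of_tower, smul_smul, ← pow_add,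
      show n + 1 + (n + 1) = n + (n + 2) by omega, pow_add, mul_smul]
    exact Submodule.smul_mem _ _ h
  simpa only [smul_right_of_tower] using hv _ hu

theorem IsMaximalIntegralLattice.smul_self_mem_one_of_pow_smul (hL : B.IsMaximalIntegralLattice L)
    (hB : B.IsSymm) {v : V} (hv : v ∈ B.dualSubmodule L) (r : R) {n : ℕ}
    (h : r ^ n • B v v ∈ (1 : Submodule R K)) : r • B v v ∈ (1 : Submodule R K) := by
  have descend : ∀ m : ℕ, r ^ (m + 1) • B v v ∈ (1 : Submodule R K) →
      r • B v v ∈ (1 : Submodule R K) := by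
    intro m
    induction m with
    | zero => rw [zero_add, pow_one]; exact fun h => h
    | succ m ih => exact fun hm => ih (hL.pow_succ_smul_self_mem_one_of_pow_succ_succ hB hv r hm)
  exact descend n (by rw [pow_succ', mul_smul]; exact Submodule.smul_mem _ r h)

end LinearMap.BilinForm

theorem IsDiscreteValuationRing.exists_pow_smul_mem_one {R K : Type*} [CommRing R] [IsDomain R]
    [IsDiscreteValuationRing R] [Field K] [Algebra R K] [IsFractionRing R K] {π : R}
    (hπ : Irreducible π) (a : K) : ∃ n : ℕ, π ^ n • a ∈ (1 : Submodule R K) := by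
  obtain ⟨⟨x, y⟩, hxy⟩ := IsLocalization.surj (nonZeroDivisors R) a
  obtain ⟨n, u, hu⟩ := associated_pow_irreducible (nonZeroDivisors.ne_zero y.2) hπ
  refine ⟨n, Submodule.mem_one.mpr ⟨u * x, ?_⟩⟩
  rw [Algebra.smul_def, ← hu, map_mul, map_mul, ← hxy]
  ring

namespace LinearMap.BilinForm

variable {R K V : Type*} [CommRing R] [IsDomain R] [IsDiscreteValuationRing R] [Field K]
  [Algebra R K] [IsFractionRing R K] [AddCommGroup V] [Module K V] [Module R V]
  [IsScalarTower R K V] {B : BilinForm K V} {L : Submodule R V}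

theorem IsMaximalIntegralLattice.smul_mem_of_mem_dualSubmodule (hL : B.IsMaximalIntegralLattice L)
    (hB : B.IsSymm) {π : R} (hπ : Irreducible π) {v : V} (hv : v ∈ B.dualSubmodule L) :
    π • v ∈ L := by
  obtain ⟨n, hn⟩ := IsDiscreteValuationRing.exists_pow_smul_mem_one hπ (B v v)
  refine hL.mem_of_mem_dualSubmodule hB (Submodule.smul_mem _ π hv) ?_
  rw [smul_left_of_tower, smul_right_of_tower]
  exact Submodule.smul_mem _ π (hL.smul_self_mem_one_of_pow_smul hB hv π hn)

end LinearMap.BilinForm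

theorem stmt15_general (R : Type*) [CommRing R] [IsDomain R] [IsDiscreteValuationRing R]
    (π : R) (hπ : Irreducible π)
    (K : Type*) [Field K] [Algebra R K] [IsFractionRing R K]
    (V : Type*) [AddCommGroup V] [Module K V]
    [Module R V] [IsScalarTower R K V]
    (B : LinearMap.BilinForm K V)
    (hsymm : ∀ v w : V, B v w = B w v)
    (L : Submodule R V) (hfg : L.FG)
    (hfull : Submodule.span K (L : Set V) = ⊤)
    (hint : ∀ x ∈ L, ∀ y ∈ L, ∃ r : R, algebraMap R K r = B x y)
    (hmax : ∀ L' : Submodule R V, L'.FG → Submodule.span K (L' : Set V) = ⊤ →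
      (∀ x ∈ L', ∀ y ∈ L', ∃ r : R, algebraMap R K r = B x y) → L ≤ L' → L' = L) :
    ∀ l : V,
      (l ∈ L ∧ ∀ x ∈ L, ∃ r : R, algebraMap R K (π * r) = B l x) ↔
        (∃ v : V, (∀ x ∈ L, ∃ r : R, algebraMap R K r = B x v) ∧ l = π • v) := by
  have hL : B.IsMaximalIntegralLattice L :=
    { fg := hfg
      span_eq_top := hfull
      le_dualSubmodule := fun x hx y hy => Submodule.mem_one.mpr (hint x hx y hy)
      eq_of_le := fun hfg' hfull' hint' =>
        hmax _ hfg' hfull' fun x hx y hy => Submodule.mem_one.mp (hint' hx y hy) }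
  have hπK : algebraMap R K π ≠ 0 :=
    (map_ne_zero_iff _ (IsFractionRing.injective R K)).mpr hπ.ne_zero
  intro l
  constructor
  · rintro ⟨-, hl⟩
    refine ⟨(algebraMap R K π)⁻¹ • l, fun x hx => ?_, ?_⟩
    · obtain ⟨r, hr⟩ := hl x hx
      refine ⟨r, ?_⟩
      rw [map_smul, smul_eq_mul, hsymm x l, ← hr, map_mul, inv_mul_cancel_left₀ hπK]
    · rw [← algebraMap_smul K π, smul_inv_smul₀ hπK]
  · rintro ⟨v, hv, rfl⟩
    have hv' : v ∈ B.dualSubmodule L := fun x hx => by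
      rw [hsymm]
      exact Submodule.mem_one.mpr (hv x hx)
    refine ⟨hL.smul_mem_of_mem_dualSubmodule ⟨hsymm⟩ hπ hv', fun x hx => ?_⟩
    obtain ⟨r, hr⟩ := hv x hx
    exact ⟨r, by rw [map_mul, hr, B.smul_left_of_tower, Algebra.smul_def, hsymm]⟩

/-- For a maximal integral lattice `L` with dual `L*`, one has
`{l ∈ L : ⟨l, L⟩ ⊆ πR} = π L*`. -/
theorem stmt15 (R : Type*) [CommRing R] [IsDomain R] [IsDiscreteValuationRing R]
    (π : R) (hπ : Irreducible π)
    (K : Type*) [Field K] [Algebra R K] [IsFractionRing R K]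
    (V : Type*) [AddCommGroup V] [Module K V] [FiniteDimensional K V]
    [Module R V] [IsScalarTower R K V]
    (B : LinearMap.BilinForm K V) (hB : B.Nondegenerate)
    (hsymm : ∀ v w : V, B v w = B w v)
    (L : Submodule R V) (hfg : L.FG)
    (hfull : Submodule.span K (L : Set V) = ⊤)
    (hint : ∀ x ∈ L, ∀ y ∈ L, ∃ r : R, algebraMap R K r = B x y)
    (hmax : ∀ L' : Submodule R V, L'.FG → Submodule.span K (L' : Set V) = ⊤ →
      (∀ x ∈ L', ∀ y ∈ L', ∃ r : R, algebraMap R K r = B x y) → L ≤ L' → L' = L) :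
    ∀ l : V,
      (l ∈ L ∧ ∀ x ∈ L, ∃ r : R, algebraMap R K (π * r) = B l x) ↔
        (∃ v : V, (∀ x ∈ L, ∃ r : R, algebraMap R K r = B x v) ∧ l = π • v) :=
  stmt15_general R π hπ K V B hsymm L hfg hfull hint hmax
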